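/- Every compact topological semigroup is stable: for all elements s, t, if s is in the right ideal generated by t (s ≤_R t) and s, t generate the same two-sided ideal (s J t), then s R t; dually, if s ≤_L t and s J t, then s L t. -/
import Mathlib
set_option linter.unusedSectionVars false


section Key

variable {T : Type*} [Semigroup T] [TopologicalSpace T] [CompactSpace T]
  [T2Space T] [ContinuousMul T]

/-- `pw a n = a^(n+1)` in a semigroup. -/
def pw {T : Type*} [Semigroup T] (a : T) : ℕ → T
  | 0 => a
  | n + 1 => pw a n * a

lemma pw_succ_left {T : Type*} [Semigroup T] (a : T) (n : ℕ) :
    pw a (n + 1) = a * pw a n := by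
  induction n with
  | zero => rfl
  | succ n ih => show pw a (n+1) * a = a * (pw a n * a); rw [ih, mul_assoc]

lemma pw_mul {T : Type*} [Semigroup T] (a : T) (n m : ℕ) :
    pw a n * pw a m = pw a (n + m + 1) := by
  induction m with
  | zero => rfl
  | succ m ih =>
      show pw a n * (pw a m * a) = _
      rw [← mul_assoc, ih]; rfl

/-- Closure of the tail of powers. -/
def Cset {T : Type*} [Semigroup T] [TopologicalSpace T] (a : T) (N : ℕ) : Set T :=
  closure {x | ∃ n, N ≤ n ∧ pw a n = x}

lemma Cset_anti (a : T) {N M : ℕ} (h : N ≤ M) : Cset a M ⊆ Cset a N :=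
  closure_mono (fun _ ⟨n, hn, he⟩ => ⟨n, le_trans h hn, he⟩)

lemma Cset_closed (a : T) (N : ℕ) : IsClosed (Cset a N) := isClosed_closure

lemma Cset_nonempty (a : T) (N : ℕ) : (Cset a N).Nonempty :=
  ⟨pw a N, subset_closure ⟨N, le_refl N, rfl⟩⟩

lemma Cset_succ_subset_mul_left (a : T) (N : ℕ) :
    Cset a (N + 1) ⊆ (fun x => a * x) '' Cset a N := by
  have hcpt : IsCompact ((fun x => a * x) '' Cset a N) :=
    ((Cset_closed a N).isCompact).image (continuous_mul_left a)
  refine closure_minimal ?_ hcpt.isClosed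
  rintro x ⟨n, hn, rfl⟩
  obtain ⟨m, rfl⟩ := Nat.exists_eq_add_of_le hn
  refine ⟨pw a (N + m), subset_closure ⟨N + m, Nat.le_add_right _ _, rfl⟩, ?_⟩
  show a * pw a (N + m) = pw a (N + 1 + m)
  rw [show N + 1 + m = N + m + 1 by omega, pw_succ_left]

lemma Cset_succ_subset_mul_right (a : T) (N : ℕ) :
    Cset a (N + 1) ⊆ (fun x => x * a) '' Cset a N := by
  have hcpt : IsCompact ((fun x => x * a) '' Cset a N) :=
    ((Cset_closed a N).isCompact).image (continuous_mul_right a)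
  refine closure_minimal ?_ hcpt.isClosed
  rintro x ⟨n, hn, rfl⟩
  obtain ⟨m, rfl⟩ := Nat.exists_eq_add_of_le hn
  refine ⟨pw a (N + m), subset_closure ⟨N + m, Nat.le_add_right _ _, rfl⟩, ?_⟩
  show pw a (N + m) * a = pw a (N + 1 + m)
  rw [show N + 1 + m = N + m + 1 by omega]; rfl

lemma Cset_mul (a : T) (N M : ℕ) {x y : T} (hx : x ∈ Cset a N) (hy : y ∈ Cset a M) :
    x * y ∈ Cset a (N + M + 1) := by
  have h1 : (x, y) ∈ closure ({x | ∃ n, N ≤ n ∧ pw a n = x} ×ˢ {x | ∃ n, M ≤ n ∧ pw a n = x}) := by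
    rw [closure_prod_eq]; exact ⟨hx, hy⟩
  have h2 : x * y ∈ closure ((fun p : T × T => p.1 * p.2) ''
      ({x | ∃ n, N ≤ n ∧ pw a n = x} ×ˢ {x | ∃ n, M ≤ n ∧ pw a n = x})) :=
    image_closure_subset_closure_image continuous_mul ⟨(x, y), h1, rfl⟩
  refine closure_mono ?_ h2
  rintro z ⟨⟨p, q⟩, ⟨⟨n, hn, rfl⟩, ⟨m, hm, rfl⟩⟩, rfl⟩
  exact ⟨n + m + 1, by omega, (pw_mul a n m).symm⟩

/-- Key lemma: an idempotent in the closure of the powers of `a`, reachable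
from `a` by one multiplication on either side. -/
lemma key (a : T) : ∃ e, e * e = e ∧ e ∈ Cset a 0 ∧ (∃ b, a * b = e) ∧ ∃ b, b * a = e := by
  set Om : Set T := ⋂ N, Cset a N with hOm
  have hne : Om.Nonempty := by
    refine IsCompact.nonempty_iInter_of_sequence_nonempty_isCompact_isClosed _
      (fun N => Cset_anti a (Nat.le_succ N)) (Cset_nonempty a) ((Cset_closed a 0).isCompact)
      (Cset_closed a)
  have hcpt : IsCompact Om := ((isClosed_iInter (Cset_closed a)).isCompact)
  have hmul : ∀ x ∈ Om, ∀ y ∈ Om, x * y ∈ Om := by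
    intro x hx y hy
    refine Set.mem_iInter.2 fun N => ?_
    exact Cset_anti a (by omega) (Cset_mul a N 0 (Set.mem_iInter.1 hx N) (Set.mem_iInter.1 hy 0))
  obtain ⟨e, heOm, hee⟩ := exists_idempotent_in_compact_subsemigroup
    (fun r => continuous_mul_right r) Om hne hcpt hmul
  have he1 : e ∈ Cset a 1 := Set.mem_iInter.1 heOm 1
  obtain ⟨b, _, hb⟩ := Cset_succ_subset_mul_left a 0 he1
  obtain ⟨b', _, hb'⟩ := Cset_succ_subset_mul_right a 0 he1
  exact ⟨e, hee, Set.mem_iInter.1 heOm 0, ⟨b, hb⟩, ⟨b', hb'⟩⟩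

end Key

lemma pw_prod {S : Type*} [Semigroup S] (c d : S) (n : ℕ) :
    pw ((c, d) : S × S) n = (pw c n, pw d n) := by
  induction n with
  | zero => rfl
  | succ n ih => show pw ((c,d) : S × S) n * (c,d) = _; rw [ih]; rfl

lemma engine {S : Type*} [Semigroup S] [TopologicalSpace S] [CompactSpace S]
    [T2Space S] [ContinuousMul S] (t c d : S) (h : t = c * (t * d)) :
    (∃ b, t = (t * d) * b) ∧ (∃ b, t = b * (c * t)) := by
  obtain ⟨⟨e, f⟩, hidem, hcl, ⟨⟨b₁, b₂⟩, hab⟩, ⟨⟨b₁', b₂'⟩, hba⟩⟩ := key ((c, d) : S × S)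
  have hpow : ∀ n, pw c n * (t * pw d n) = t := by
    intro n; induction n with
    | zero => exact h.symm
    | succ n ih =>
        rw [pw_succ_left c n]
        show (c * pw c n) * (t * (pw d n * d)) = t
        calc (c * pw c n) * (t * (pw d n * d))
            = c * ((pw c n * (t * pw d n)) * d) := by simp only [mul_assoc]
          _ = c * (t * d) := by rw [ih]
          _ = t := h.symm
  have hef : e * (t * f) = t := by
    have hcl2 : IsClosed {p : S × S | p.1 * (t * p.2) = t} :=
      isClosed_eq (continuous_fst.mul (continuous_const.mul continuous_snd)) continuous_const
    have hsub : Cset ((c, d) : S × S) 0 ⊆ {p : S × S | p.1 * (t * p.2) = t} := by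
      refine closure_minimal ?_ hcl2
      rintro p ⟨n, -, rfl⟩
      show (pw ((c,d) : S × S) n).1 * (t * (pw ((c,d) : S × S) n).2) = t
      rw [pw_prod]; exact hpow n
    exact hsub hcl
  have hff : f * f = f := congrArg Prod.snd hidem
  have hee : e * e = e := congrArg Prod.fst hidem
  have htf : t * f = t := by
    conv_lhs => rw [← hef]
    rw [mul_assoc, mul_assoc, hff, hef]
  have het : e * t = t := by
    conv_lhs => rw [← hef]
    rw [← mul_assoc, hee, hef]
  constructor
  · refine ⟨b₂, ?_⟩
    have hf : d * b₂ = f := congrArg Prod.snd hab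
    rw [mul_assoc, hf, htf]
  · refine ⟨b₁', ?_⟩
    have he : b₁' * c = e := congrArg Prod.fst hba
    rw [← mul_assoc, he, het]



/-- Green's quasi-order ≤_R : s ≤_R t iff sS¹ ⊆ tS¹, i.e. s ∈ tS¹. -/
def leR {S : Type*} [Semigroup S] (s t : S) : Prop := s = t ∨ ∃ x, s = t * x

/-- Green's quasi-order ≤_L : s ≤_L t iff S¹s ⊆ S¹t, i.e. s ∈ S¹t. -/
def leL {S : Type*} [Semigroup S] (s t : S) : Prop := s = t ∨ ∃ x, s = x * t

/-- Green's quasi-order ≤_J : s ≤_J t iff S¹sS¹ ⊆ S¹tS¹, i.e. s ∈ S¹tS¹. -/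
def leJ {S : Type*} [Semigroup S] (s t : S) : Prop :=
  s = t ∨ (∃ x, s = x * t) ∨ (∃ y, s = t * y) ∨ ∃ x y, s = x * t * y

/-- Green's equivalence R. -/
def eqR {S : Type*} [Semigroup S] (s t : S) : Prop := leR s t ∧ leR t s

/-- Green's equivalence L. -/
def eqL {S : Type*} [Semigroup S] (s t : S) : Prop := leL s t ∧ leL t s

/-- Green's equivalence J. -/
def eqJ {S : Type*} [Semigroup S] (s t : S) : Prop := leJ s t ∧ leJ t s

/-- Every compact topological semigroup is stable: s ≤_R t and
s J t imply s R t, and dually s ≤_L t and s J t imply s L t. -/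
theorem stmt_2 {S : Type*} [Semigroup S] [TopologicalSpace S] [CompactSpace S]
    [T2Space S] [ContinuousMul S] (s t : S) :
    (leR s t → eqJ s t → eqR s t) ∧ (leL s t → eqJ s t → eqL s t) := by

  simp only [leR, leL, leJ, eqR, eqL, eqJ]
  constructor
  · rintro (rfl | ⟨u, rfl⟩) ⟨-, hJ⟩
    · exact ⟨Or.inl rfl, Or.inl rfl⟩
    · refine ⟨Or.inr ⟨u, rfl⟩, ?_⟩
      rcases hJ with h | ⟨x, h⟩ | ⟨y, h⟩ | ⟨x, y, h⟩
      · exact Or.inl h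
      · obtain ⟨⟨b, hb⟩, -⟩ := engine t x u h
        exact Or.inr ⟨b, hb⟩
      · exact Or.inr ⟨y, h⟩
      · obtain ⟨⟨b, hb⟩, -⟩ := engine t x (u * y) (h.trans (by simp [mul_assoc]))
        exact Or.inr ⟨y * b, hb.trans (by simp [mul_assoc])⟩
  · rintro (rfl | ⟨x, rfl⟩) ⟨-, hJ⟩
    · exact ⟨Or.inl rfl, Or.inl rfl⟩
    · refine ⟨Or.inr ⟨x, rfl⟩, ?_⟩
      rcases hJ with h | ⟨z, h⟩ | ⟨y, h⟩ | ⟨z, y, h⟩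
      · exact Or.inl h
      · exact Or.inr ⟨z, h⟩
      · obtain ⟨-, ⟨b, hb⟩⟩ := engine t x y (h.trans (mul_assoc _ _ _))
        exact Or.inr ⟨b, hb⟩
      · obtain ⟨-, ⟨b, hb⟩⟩ := engine t (z * x) y (h.trans (by simp [mul_assoc]))
        exact Or.inr ⟨b * z, hb.trans (by simp [mul_assoc])⟩
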